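/- Let (M, F) be a non-compact strongly pseudoconvex Rund Kähler-Finsler-like manifold and ρ a smooth real function on M. Then the conformal metric F̃(z, v) = e^{ρ(z)/2}F(z, v) is Rund Kähler-Finsler-like if and only if ∂∂̄ρ = 0 on M. -/

import Mathlib

/-!
A local-coordinate formalization of strongly pseudoconvex complex Finsler metrics,
following Abate–Patrizio and Munteanu.  A point of the (slit) holomorphic tangent
bundle `M̃ = T^{1,0}M ∖ {0}` is represented in a holomorphic coordinate chart by a
pair `(z, v) ∈ ℂⁿ × ℂⁿ`.  All derivatives are genuine Wirtinger derivatives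
(expressed through `fderiv ℝ`), and all the tensors of the Chern–Finsler
connection `D`, the canonical connection `∇` of Munteanu and its extension `∇ᶜ`
are defined by their standard local-coordinate expressions.  Horizontal
`(p,q)`-forms on the projective tangent bundle `PM̃` are represented by their
(alternating, `0`-homogeneous) coefficient arrays, in the convention
`φ = (1/(p! q!)) φ_{I J̄} dz^I ∧ dz̄^J`.
The invariant integral `∫_{PM̃} · dμ_{PM̃}` (which exists when the base manifold
`M` is compact) is encoded by the structure `PTMIntegral`; a hypothesis
`(vol : PTMIntegral F)` plays the role of the compactness of `M`.
-/

open ComplexConjugate BigOperators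

noncomputable section

namespace CFG

/-- Points of the holomorphic tangent bundle in local coordinates: `(z, v)`. -/
abbrev Pt (n : ℕ) : Type := (Fin n → ℂ) × (Fin n → ℂ)

/-- The slit domain `M̃` : `v ≠ 0`. -/
def slit (n : ℕ) : Set (Pt n) := {p | p.2 ≠ 0}

variable {n : ℕ}

/-- Wirtinger derivative `∂/∂z^μ`. -/
def dz (μ : Fin n) (f : Pt n → ℂ) : Pt n → ℂ := fun p =>
  (1 / 2 : ℂ) * (fderiv ℝ f p (Pi.single μ 1, 0) -
    Complex.I * fderiv ℝ f p (Pi.single μ Complex.I, 0))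

/-- Wirtinger derivative `∂/∂z̄^μ`. -/
def dzb (μ : Fin n) (f : Pt n → ℂ) : Pt n → ℂ := fun p =>
  (1 / 2 : ℂ) * (fderiv ℝ f p (Pi.single μ 1, 0) +
    Complex.I * fderiv ℝ f p (Pi.single μ Complex.I, 0))

/-- Wirtinger derivative `∂/∂v^μ`. -/
def dv (μ : Fin n) (f : Pt n → ℂ) : Pt n → ℂ := fun p =>
  (1 / 2 : ℂ) * (fderiv ℝ f p (0, Pi.single μ 1) -
    Complex.I * fderiv ℝ f p (0, Pi.single μ Complex.I))

/-- Wirtinger derivative `∂/∂v̄^μ`. -/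
def dvb (μ : Fin n) (f : Pt n → ℂ) : Pt n → ℂ := fun p =>
  (1 / 2 : ℂ) * (fderiv ℝ f p (0, Pi.single μ 1) +
    Complex.I * fderiv ℝ f p (0, Pi.single μ Complex.I))

/-- Wirtinger derivative `∂/∂z^μ` for functions on the base manifold. -/
def bdz (μ : Fin n) (f : (Fin n → ℂ) → ℂ) : (Fin n → ℂ) → ℂ := fun z =>
  (1 / 2 : ℂ) * (fderiv ℝ f z (Pi.single μ 1) -
    Complex.I * fderiv ℝ f z (Pi.single μ Complex.I))

/-- Wirtinger derivative `∂/∂z̄^μ` for functions on the base manifold. -/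
def bdzb (μ : Fin n) (f : (Fin n → ℂ) → ℂ) : (Fin n → ℂ) → ℂ := fun z =>
  (1 / 2 : ℂ) * (fderiv ℝ f z (Pi.single μ 1) +
    Complex.I * fderiv ℝ f z (Pi.single μ Complex.I))

/-- A real function viewed as a complex-valued one. -/
def cplx (G : Pt n → ℝ) : Pt n → ℂ := fun p => (G p : ℂ)

/-- Levi matrix entry `G_{αβ̄} = ∂²G/∂v^α ∂v̄^β`. -/
def levi (G : Pt n → ℝ) (α β : Fin n) : Pt n → ℂ := dv α (dvb β (cplx G))

/-- The coefficient array of a horizontal `(p,q)`-form, in the convention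
`φ = (1/(p! q!)) φ_{α₁⋯αₚ β̄₁⋯β̄__q} dz^{α₁} ∧ ⋯ ∧ dz̄^{β_q}`. -/
abbrev HForm (n p q : ℕ) : Type := (Fin p → Fin n) → (Fin q → Fin n) → Pt n → ℂ

/-- The sign of a permutation, as a complex number. -/
def permSign {m : ℕ} (σ : Equiv.Perm (Fin m)) : ℂ := ((Equiv.Perm.sign σ : ℤ) : ℂ)

/-- The positive `(1,1)`-form `√-1 α ∧ ᾱ` built from the `(1,0)`-covector
`α = a_μ dz^μ`. -/
def oneone (a : Fin n → ℂ) : HForm n 1 1 := fun I J _ =>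
  Complex.I * a (I 0) * conj (a (J 0))

/-- Wedge product of horizontal forms (coefficient arrays, shuffle formula). -/
def wedge {p q p' q' : ℕ} (φ : HForm n p q) (ψ : HForm n p' q') :
    HForm n (p + p') (q + q') := fun I J x =>
  (((p.factorial * p'.factorial * q.factorial * q'.factorial : ℕ) : ℂ))⁻¹ *
    ∑ σ : Equiv.Perm (Fin (p + p')), ∑ τ : Equiv.Perm (Fin (q + q')),
      permSign σ * permSign τ *
        (φ (fun i => I (σ (Fin.castAdd p' i))) (fun j => J (τ (Fin.castAdd q' j))) x *
          ψ (fun i => I (σ (Fin.natAdd p i))) (fun j => J (τ (Fin.natAdd q j))) x)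

/-- The density of a top-degree `(n,n)` horizontal form with respect to the
positive volume form `√-1^{n²} dz^1 ∧ ⋯ ∧ dz^n ∧ dz̄^1 ∧ ⋯ ∧ dz̄^n`. -/
def topVal {m : ℕ} (Φ : HForm n m m) (h : m ≤ n) : Pt n → ℂ := fun x =>
  Φ (fun j => Fin.castLE h j) (fun j => Fin.castLE h j) x / Complex.I ^ (n ^ 2)

/-- `φ` is (the coefficient array of) a smooth horizontal `(p,q)`-form on `PM̃`:
it is alternating in each group of indices, smooth on the slit bundle, and its
coefficients are `0`-homogeneous with respect to the fibre coordinate `v`. -/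
def IsHorizontalForm {p q : ℕ} (φ : HForm n p q) : Prop :=
  (∀ (σ : Equiv.Perm (Fin p)) (I : Fin p → Fin n) (J : Fin q → Fin n) (x : Pt n),
      φ (I ∘ σ) J x = permSign σ * φ I J x) ∧
  (∀ (τ : Equiv.Perm (Fin q)) (I : Fin p → Fin n) (J : Fin q → Fin n) (x : Pt n),
      φ I (J ∘ τ) x = permSign τ * φ I J x) ∧
  (∀ I J, ContDiffOn ℝ (⊤ : ℕ∞) (φ I J) (slit n)) ∧
  (∀ I J (z v : Fin n → ℂ) (ζ : ℂ), ζ ≠ 0 → v ≠ 0 →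
      φ I J (z, ζ • v) = φ I J (z, v))

/-- A strongly pseudoconvex complex Finsler metric on (a chart of) `M`,
recorded through `G = F²`. -/
structure SPCF (n : ℕ) where
  /-- `G = F²`. -/
  G : Pt n → ℝ
  contG : Continuous G
  smoothG : ContDiffOn ℝ (⊤ : ℕ∞) G (slit n)
  posG : ∀ p ∈ slit n, 0 < G p
  /-- `F(z, ζv) = |ζ| F(z,v)`, i.e. `G(z, ζv) = |ζ|² G(z,v)`. -/
  homogG : ∀ (z v : Fin n → ℂ) (ζ : ℂ), G (z, ζ • v) = ‖ζ‖ ^ 2 * G (z, v)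
  /-- The Levi matrix `(G_{αβ̄})` is positive definite on the slit bundle. -/
  posdef : ∀ p ∈ slit n, ∀ w : Fin n → ℂ, w ≠ 0 →
    0 < (∑ α, ∑ β, levi G α β p * w α * conj (w β)).re ∧
      (∑ α, ∑ β, levi G α β p * w α * conj (w β)).im = 0

namespace SPCF

variable (F : SPCF n)

/-- `G` as a complex-valued function. -/
def Gc : Pt n → ℂ := cplx F.G

/-- The fundamental tensor `G_{αβ̄}`. -/
def Gm (α β : Fin n) : Pt n → ℂ := levi F.G α β

/-- The Levi matrix at a point. -/
def Levi (p : Pt n) : Matrix (Fin n) (Fin n) ℂ := Matrix.of fun α β => F.Gm α β p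

/-- The inverse metric: `Ginv λ α = G^{λ̄α}`, so that `∑ λ, G_{βλ̄} G^{λ̄α} = δ_β^α`. -/
def Ginv (l α : Fin n) : Pt n → ℂ := fun p => (F.Levi p)⁻¹ l α

/-- The Chern–Finsler nonlinear connection coefficients `Γ^α_{;μ} = G^{λ̄α} G_{λ̄;μ}`. -/
def Γ0 (α μ : Fin n) : Pt n → ℂ := fun p => ∑ l, F.Ginv l α p * dz μ (dvb l F.Gc) p

/-- The horizontal derivative `δ_μ = ∂_μ - Γ^α_{;μ} ∂̇_α`. -/
def δh (μ : Fin n) (f : Pt n → ℂ) : Pt n → ℂ := fun p =>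
  dz μ f p - ∑ α, F.Γ0 α μ p * dv α f p

/-- The conjugate horizontal derivative `δ_ν̄`. -/
def δhb (ν : Fin n) (f : Pt n → ℂ) : Pt n → ℂ := fun p =>
  dzb ν f p - ∑ α, conj (F.Γ0 α ν p) * dvb α f p

/-- The horizontal Chern–Finsler connection coefficients `Γ^α_{β;μ} = G^{λ̄α} δ_μ(G_{βλ̄})`. -/
def Γh (α β μ : Fin n) : Pt n → ℂ := fun p => ∑ l, F.Ginv l α p * F.δh μ (F.Gm β l) p

/-- `G_{αβ̄σ}`. -/
def Gm3 (α β σ : Fin n) : Pt n → ℂ := dv σ (F.Gm α β)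

/-- `G_{αβ̄τ̄}`. -/
def Gm3b (α β τ : Fin n) : Pt n → ℂ := dvb τ (F.Gm α β)

/-- The holomorphic sectional curvature tensor `Ω_{αβ̄;μν̄}` of the
Chern–Finsler connection `D`. -/
def Om (α β μ ν : Fin n) : Pt n → ℂ := fun p =>
  -F.δhb ν (F.δh μ (F.Gm α β)) p
  + (∑ l, ∑ k, F.δh μ (F.Gm α l) p * F.Ginv l k p * F.δhb ν (F.Gm k β) p)
  - ∑ σ, F.Gm3 α β σ p * F.δhb ν (F.Γ0 σ μ) p

/-- The canonical connection coefficients `L^α_{βμ}`. -/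
def Lh (α β μ : Fin n) : Pt n → ℂ := fun p =>
  (1 / 2 : ℂ) * ∑ l, F.Ginv l α p * (F.δh μ (F.Gm β l) p + F.δh β (F.Gm μ l) p)

/-- The canonical connection coefficients `L^α_{βμ̄}`. -/
def Lhb (α β μ : Fin n) : Pt n → ℂ := fun p =>
  (1 / 2 : ℂ) * ∑ l, F.Ginv l α p * (F.δhb μ (F.Gm β l) p - F.δhb l (F.Gm β μ) p)

/-- The holomorphic sectional curvature tensor `R_{αβ̄μν̄}` of Munteanu's
canonical connection `∇`, i.e.
`⟨∇_{δ_μ}∇_{δ_ν̄}δ_α - ∇_{δ_ν̄}∇_{δ_μ}δ_α - ∇_{[δ_μ,δ_ν̄]}δ_α, δ_β⟩`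
expressed in local coordinates. -/
def Rc (α β μ ν : Fin n) : Pt n → ℂ := fun p =>
  (∑ g, (F.δh μ (F.Lhb g α ν) p - F.δhb ν (F.Lh g α μ) p
      + ∑ σ, (F.Lhb σ α ν p * F.Lh g σ μ p - F.Lh σ α μ p * F.Lhb g σ ν p)) * F.Gm g β p)
  - ∑ σ, F.Gm3 α β σ p * F.δhb ν (F.Γ0 σ μ) p

/-- The holomorphic sectional curvature tensor `K_{αβ̄μν̄}` of the extension `∇ᶜ`
of the canonical connection to the complexified tangent bundle, in local
coordinates (the extra term, compared with `R_{αβ̄μν̄}`, comes from the mixed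
connection coefficients `L^α_{β̄μ} = L^α_{μβ̄}` and their conjugates). -/
def Kc (α β μ ν : Fin n) : Pt n → ℂ := fun p =>
  (∑ g, (F.δh μ (F.Lhb g α ν) p - F.δhb ν (F.Lh g α μ) p
      + ∑ σ, (F.Lhb σ α ν p * F.Lh g σ μ p
          + conj (F.Lhb σ ν α p) * F.Lhb g μ σ p
          - F.Lh σ α μ p * F.Lhb g σ ν p)) * F.Gm g β p)
  - ∑ σ, F.Gm3 α β σ p * F.δhb ν (F.Γ0 σ μ) p

/-- The horizontal torsion tensor `S^γ_{αβ} = ½(Γ^γ_{α;β} - Γ^γ_{β;α})`. -/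
def Sh (γ α β : Fin n) : Pt n → ℂ := fun p => (1 / 2 : ℂ) * (F.Γh γ α β p - F.Γh γ β α p)

/-- `S_α = ∑_γ S^γ_{αγ}`. -/
def S1 (α : Fin n) : Pt n → ℂ := fun p => ∑ γ, F.Sh γ α γ p

/-- `S_{αγλ̄} = ½(δ_γ(G_{αλ̄}) - δ_α(G_{γλ̄}))`. -/
def Shl (α γ l : Fin n) : Pt n → ℂ := fun p =>
  (1 / 2 : ℂ) * (F.δh γ (F.Gm α l) p - F.δh α (F.Gm γ l) p)

/-- The Ricci curvature `Ω_{μν̄} = G^{β̄α} Ω_{αβ̄;μν̄}` of the Chern–Finsler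
connection, so that `Ric_D = √-1 Ω_{μν̄} dz^μ ∧ dz̄^ν`. -/
def ricD (μ ν : Fin n) : Pt n → ℂ := fun p => ∑ α, ∑ β, F.Ginv β α p * F.Om α β μ ν p

/-- The Ricci curvature `R_{μν̄} = G^{β̄α} R_{αβ̄μν̄}` of the canonical connection. -/
def ricR (μ ν : Fin n) : Pt n → ℂ := fun p => ∑ α, ∑ β, F.Ginv β α p * F.Rc α β μ ν p

/-- The Ricci curvature `K_{μν̄} = G^{β̄α} K_{αβ̄μν̄}` of the connection `∇ᶜ`. -/
def ricK (μ ν : Fin n) : Pt n → ℂ := fun p => ∑ α, ∑ β, F.Ginv β α p * F.Kc α β μ ν p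

/-- The scalar curvature `s_D = G^{β̄α} G^{ν̄μ} Ω_{αβ̄;μν̄}`. -/
def sD : Pt n → ℂ := fun p => ∑ μ, ∑ ν, F.Ginv ν μ p * F.ricD μ ν p

/-- The scalar curvature `s_∇ = G^{β̄α} G^{ν̄μ} R_{αβ̄μν̄}`. -/
def sR : Pt n → ℂ := fun p => ∑ μ, ∑ ν, F.Ginv ν μ p * F.ricR μ ν p

/-- The scalar curvature `s_{∇ᶜ} = G^{β̄α} G^{ν̄μ} K_{αβ̄μν̄}`. -/
def sK : Pt n → ℂ := fun p => ∑ μ, ∑ ν, F.Ginv ν μ p * F.ricK μ ν p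

/-- `(𝔖 ∘ 𝔖̄)_{μν̄} = G^{β̄α} G^{λ̄γ} S_{αγν̄} conj (S_{βλμ̄})`. -/
def SS (μ ν : Fin n) : Pt n → ℂ := fun p =>
  ∑ α, ∑ β, ∑ γ, ∑ l,
    F.Ginv β α p * F.Ginv l γ p * F.Shl α γ ν p * conj (F.Shl β l μ p)

/-- `⟨𝔖, 𝔖⟩ = G^{ν̄μ} (𝔖 ∘ 𝔖̄)_{μν̄}`. -/
def SnormSq : Pt n → ℂ := fun p => ∑ μ, ∑ ν, F.Ginv ν μ p * F.SS μ ν p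

/-- `F` is a Kähler-Finsler metric: `Γ^α_{β;μ} = Γ^α_{μ;β}`. -/
def IsKaehler : Prop := ∀ (α β μ : Fin n), ∀ p ∈ slit n, F.Γh α β μ p = F.Γh α μ β p

/-- `F` is a weakly Kähler-Finsler metric: `G_α (Γ^α_{β;μ} - Γ^α_{μ;β}) v^β = 0`. -/
def IsWeaklyKaehler : Prop := ∀ (μ : Fin n), ∀ p ∈ slit n,
  (∑ α, ∑ β, dv α F.Gc p * (F.Γh α β μ p - F.Γh α μ β p) * p.2 β) = 0

/-- The horizontal curvature `Ω̂^α_{β;μν̄} = -δ_ν̄(Γ^α_{β;μ})` of the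
complex Rund connection. -/
def RundCurv (α β μ ν : Fin n) : Pt n → ℂ := fun p => -F.δhb ν (F.Γh α β μ) p

/-- `F` is Rund Kähler-Finsler-like: `Ω̂^α_{β;μν̄} = Ω̂^α_{μ;βν̄}`. -/
def IsRundKL : Prop := ∀ (α β μ ν : Fin n), ∀ p ∈ slit n,
  F.RundCurv α β μ ν p = F.RundCurv α μ β ν p

/-- The holomorphic flag curvature `K_D(H)` of the Chern–Finsler connection
along the horizontal vector `H = H^α δ_α`. -/
def flagD (H : Fin n → ℂ) : Pt n → ℂ := fun p =>
  (∑ α, ∑ β, ∑ μ, ∑ ν, F.Om α β μ ν p * H α * conj (H β) * H μ * conj (H ν)) /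
    (∑ α, ∑ β, F.Gm α β p * H α * conj (H β)) ^ 2

/-- The holomorphic flag curvature `K_∇(H)` of the canonical connection. -/
def flagR (H : Fin n → ℂ) : Pt n → ℂ := fun p =>
  (∑ α, ∑ β, ∑ μ, ∑ ν, F.Rc α β μ ν p * H α * conj (H β) * H μ * conj (H ν)) /
    (∑ α, ∑ β, F.Gm α β p * H α * conj (H β)) ^ 2

/-- The holomorphic sectional curvature `K_D(v)` along `v`. -/
def holD : Pt n → ℂ := fun p =>
  (∑ α, ∑ β, ∑ μ, ∑ ν, F.Om α β μ ν p * p.2 α * conj (p.2 β) * p.2 μ * conj (p.2 ν)) /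
    (F.Gc p) ^ 2

/-- The holomorphic sectional curvature `K_∇(v)` along `v`. -/
def holR : Pt n → ℂ := fun p =>
  (∑ α, ∑ β, ∑ μ, ∑ ν, F.Rc α β μ ν p * p.2 α * conj (p.2 β) * p.2 μ * conj (p.2 ν)) /
    (F.Gc p) ^ 2

/-- The operator `∂_H` on horizontal `(p,q)`-forms. -/
def pH {p q : ℕ} (φ : HForm n p q) : HForm n (p + 1) q := fun I J x =>
  ∑ j : Fin (p + 1), (-1 : ℂ) ^ (j : ℕ) * F.δh (I j) (fun y => φ (I ∘ j.succAbove) J y) x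

/-- The operator `∂̄_H` on horizontal `(p,q)`-forms. -/
def pHbar {p q : ℕ} (φ : HForm n p q) : HForm n p (q + 1) := fun I J x =>
  (-1 : ℂ) ^ p *
    ∑ j : Fin (q + 1), (-1 : ℂ) ^ (j : ℕ) * F.δhb (J j) (fun y => φ I (J ∘ j.succAbove) y) x

/-- The horizontal fundamental form `ω_H = √-1 G_{αβ̄} dz^α ∧ dz̄^β`. -/
def omH : HForm n 1 1 := fun I J x => Complex.I * F.Gm (I 0) (J 0) x

/-- The wedge power `ω_H^k` (coefficient array in the `1/(k!k!)` convention). -/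
def omPow (k : ℕ) : HForm n k k := fun I J x =>
  Complex.I ^ k * (-1 : ℂ) ^ (k * (k - 1) / 2) * (k.factorial : ℂ) *
    ∑ σ : Equiv.Perm (Fin k), permSign σ * ∏ j, F.Gm (I j) (J (σ j)) x

/-- The pointwise Hermitian inner product `⟨·,·⟩_{PM̃}` on horizontal
`(p,q)`-forms induced by `(G_{αβ̄})`. -/
def hinner {p q : ℕ} (φ ψ : HForm n p q) : Pt n → ℂ := fun x =>
  (((p.factorial * q.factorial : ℕ) : ℂ))⁻¹ *
    ∑ I : Fin p → Fin n, ∑ J : Fin q → Fin n, ∑ I' : Fin p → Fin n, ∑ J' : Fin q → Fin n,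
      φ I J x * (∏ i, F.Ginv (I' i) (I i) x) * (∏ j, F.Ginv (J' j) (J j) x) *
        conj (ψ I' J' x)

/-- The `(0,1)`-form `∂_H^* ω_H = 2√-1 S_ᾱ dz̄^α`. -/
def pstarOmH : HForm n 0 1 := fun _ J x => 2 * Complex.I * conj (F.S1 (J 0) x)

/-- The `(1,0)`-form `∂̄_H^* ω_H = -2√-1 S_α dz^α`. -/
def pbarstarOmH : HForm n 1 0 := fun I _ x => -(2 * Complex.I) * F.S1 (I 0) x

/-- The horizontal `(1,0)`-form `𝒮 = S_α dz^α`. -/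
def SForm : HForm n 1 0 := fun I _ x => F.S1 (I 0) x

/-- `F` is a balanced complex Finsler metric: `d_H^* ω_H = 0`, i.e. both
`∂_H^* ω_H = 0` and `∂̄_H^* ω_H = 0`. -/
def IsBalanced : Prop :=
  (∀ (I : Fin 0 → Fin n) (J : Fin 1 → Fin n), ∀ x ∈ slit n, F.pstarOmH I J x = 0) ∧
  (∀ (I : Fin 1 → Fin n) (J : Fin 0 → Fin n), ∀ x ∈ slit n, F.pbarstarOmH I J x = 0)

end SPCF

/-- The invariant integral `∫_{PM̃} · dμ_{PM̃}` against the volume form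
`dμ_{PM̃} = ω_V^{n-1}/(n-1)! ∧ ω_H^n/n!` of a **compact** strongly pseudoconvex
complex Finsler manifold, applied to `0`-homogeneous functions on `M̃`
(i.e. functions on `PM̃`).  The existence of this structure encodes the
compactness of the base manifold `M`. -/
structure PTMIntegral {n : ℕ} (F : SPCF n) where
  integ : (Pt n → ℂ) → ℂ
  integ_add : ∀ f g : Pt n → ℂ, integ (fun x => f x + g x) = integ f + integ g
  integ_smul : ∀ (c : ℂ) (f : Pt n → ℂ), integ (fun x => c * f x) = c * integ f
  integ_conj : ∀ f : Pt n → ℂ, integ (fun x => conj (f x)) = conj (integ f)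
  integ_nonneg : ∀ f : Pt n → ℂ, (∀ x ∈ slit n, 0 ≤ (f x).re ∧ (f x).im = 0) →
    0 ≤ (integ f).re ∧ (integ f).im = 0
  integ_vanish : ∀ f : Pt n → ℂ, ContinuousOn f (slit n) →
    (∀ x ∈ slit n, 0 ≤ (f x).re ∧ (f x).im = 0) → integ f = 0 →
      ∀ x ∈ slit n, f x = 0

/-- `F̃ = e^{ρ/2} F` is a conformal change of `F` with smooth real factor `ρ`
on the base manifold, i.e. `G̃ = e^ρ G`. -/
def IsConformal (F Ft : SPCF n) (ρ : (Fin n → ℂ) → ℝ) : Prop :=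
  ContDiff ℝ (⊤ : ℕ∞) ρ ∧ ∀ p : Pt n, Ft.G p = Real.exp (ρ p.1) * F.G p

end CFG

open CFG

namespace CFG

open scoped ContDiff

variable {n : ℕ}

lemma isOpen_slit : IsOpen (slit n) :=
  isOpen_compl_singleton.preimage continuous_snd

lemma mem_slit_iff {p : Pt n} : p ∈ slit n ↔ p.2 ≠ 0 := Iff.rfl

lemma one_le_inf : (∞ : WithTop ℕ∞) ≠ 0 := by simp

lemma diffAt {f : Pt n → ℂ} (hf : ContDiffOn ℝ ∞ f (slit n)) {p : Pt n}
    (hp : p ∈ slit n) : DifferentiableAt ℝ f p :=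
  ((hf.differentiableOn (by simp)).differentiableAt
    (isOpen_slit.mem_nhds hp))

lemma smoothOn_fderiv_apply {f : Pt n → ℂ} (hf : ContDiffOn ℝ ∞ f (slit n)) (w : Pt n) :
    ContDiffOn ℝ ∞ (fun p => fderiv ℝ f p w) (slit n) :=
  (hf.fderiv_of_isOpen isOpen_slit (by exact_mod_cast le_top)).clm_apply contDiffOn_const

lemma smoothOn_dv {f : Pt n → ℂ} (hf : ContDiffOn ℝ ∞ f (slit n)) (σ : Fin n) :
    ContDiffOn ℝ ∞ (dv σ f) (slit n) :=
  contDiffOn_const.mul ((smoothOn_fderiv_apply hf _).sub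
    (contDiffOn_const.mul (smoothOn_fderiv_apply hf _)))

lemma smoothOn_dvb {f : Pt n → ℂ} (hf : ContDiffOn ℝ ∞ f (slit n)) (σ : Fin n) :
    ContDiffOn ℝ ∞ (dvb σ f) (slit n) :=
  contDiffOn_const.mul ((smoothOn_fderiv_apply hf _).add
    (contDiffOn_const.mul (smoothOn_fderiv_apply hf _)))

lemma smoothOn_dz {f : Pt n → ℂ} (hf : ContDiffOn ℝ ∞ f (slit n)) (σ : Fin n) :
    ContDiffOn ℝ ∞ (dz σ f) (slit n) :=
  contDiffOn_const.mul ((smoothOn_fderiv_apply hf _).sub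
    (contDiffOn_const.mul (smoothOn_fderiv_apply hf _)))

lemma smoothOn_dzb {f : Pt n → ℂ} (hf : ContDiffOn ℝ ∞ f (slit n)) (σ : Fin n) :
    ContDiffOn ℝ ∞ (dzb σ f) (slit n) :=
  contDiffOn_const.mul ((smoothOn_fderiv_apply hf _).add
    (contDiffOn_const.mul (smoothOn_fderiv_apply hf _)))

lemma smooth_bfderiv_apply {f : (Fin n → ℂ) → ℂ} (hf : ContDiff ℝ ∞ f) (w : Fin n → ℂ) :
    ContDiff ℝ ∞ (fun z => fderiv ℝ f z w) :=
  (hf.fderiv_right (by exact_mod_cast le_top)).clm_apply contDiff_const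

lemma smooth_bdz {f : (Fin n → ℂ) → ℂ} (hf : ContDiff ℝ ∞ f) (σ : Fin n) :
    ContDiff ℝ ∞ (bdz σ f) :=
  contDiff_const.mul ((smooth_bfderiv_apply hf _).sub
    (contDiff_const.mul (smooth_bfderiv_apply hf _)))

lemma smooth_bdzb {f : (Fin n → ℂ) → ℂ} (hf : ContDiff ℝ ∞ f) (σ : Fin n) :
    ContDiff ℝ ∞ (bdzb σ f) :=
  contDiff_const.mul ((smooth_bfderiv_apply hf _).add
    (contDiff_const.mul (smooth_bfderiv_apply hf _)))

lemma conj_eq_re_sub_im (z : ℂ) : conj z = (z.re : ℂ) - z.im * Complex.I := by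
  apply Complex.ext <;> simp

lemma wirt_dir (A B c : ℂ) :
    (c.re : ℂ) * A + (c.im : ℂ) * B
      = (1 / 2 : ℂ) * (A - Complex.I * B) * c + (1 / 2 : ℂ) * (A + Complex.I * B) * conj c := by
  apply Complex.ext <;>
    simp [Complex.mul_re, Complex.mul_im, Complex.add_re, Complex.add_im, Complex.sub_re,
      Complex.sub_im, Complex.div_re, Complex.div_im] <;> ring

/-- Wirtinger decomposition of a real directional derivative in a fibre direction. -/
lemma fderiv_v {f : Pt n → ℂ} {p : Pt n} (hf : DifferentiableAt ℝ f p) (w : Fin n → ℂ) :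
    fderiv ℝ f p (0, w) = ∑ σ, (dv σ f p * w σ + dvb σ f p * conj (w σ)) := by
  have hw : ((0, w) : Pt n) =
      ∑ σ, ((w σ).re • (((0 : Fin n → ℂ), (Pi.single σ (1:ℂ) : Fin n → ℂ)) : Pt n) +
        (w σ).im • (((0 : Fin n → ℂ), (Pi.single σ Complex.I : Fin n → ℂ)) : Pt n)) := by
    rw [Prod.ext_iff]
    constructor
    · rw [Prod.fst_sum]
      simp
    · funext τ
      rw [Prod.snd_sum]
      rw [Finset.sum_apply]
      rw [Finset.sum_eq_single τ]
      · simp [Complex.real_smul, Complex.re_add_im]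
      · intro σ _ hστ
        simp [Pi.single_apply, Ne.symm hστ]
      · simp
  rw [hw, map_sum]
  refine Finset.sum_congr rfl fun σ _ => ?_
  rw [map_add, map_smul, map_smul]
  simp only [dv, dvb, Complex.real_smul]
  exact wirt_dir _ _ (w σ)

lemma fderiv_v_single {f : Pt n → ℂ} {p : Pt n} (hf : DifferentiableAt ℝ f p)
    (σ : Fin n) (c : ℂ) :
    fderiv ℝ f p (0, Pi.single σ c) = dv σ f p * c + dvb σ f p * conj c := by
  rw [fderiv_v hf]
  rw [Finset.sum_eq_single σ]
  · simp
  · intro τ _ hτσ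
    simp [Pi.single_apply, hτσ]
  · simp

section Rules

variable {f g : Pt n → ℂ} {p : Pt n} {σ μ ν : Fin n} {c : ℂ}

lemma dv_mul (hf : DifferentiableAt ℝ f p) (hg : DifferentiableAt ℝ g p) :
    dv σ (fun x => f x * g x) p = dv σ f p * g p + f p * dv σ g p := by
  simp only [dv, fderiv_fun_mul hf hg, ContinuousLinearMap.add_apply,
    ContinuousLinearMap.smul_apply, smul_eq_mul]
  ring

lemma dvb_mul (hf : DifferentiableAt ℝ f p) (hg : DifferentiableAt ℝ g p) :
    dvb σ (fun x => f x * g x) p = dvb σ f p * g p + f p * dvb σ g p := by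
  simp only [dvb, fderiv_fun_mul hf hg, ContinuousLinearMap.add_apply,
    ContinuousLinearMap.smul_apply, smul_eq_mul]
  ring

lemma dz_mul (hf : DifferentiableAt ℝ f p) (hg : DifferentiableAt ℝ g p) :
    dz σ (fun x => f x * g x) p = dz σ f p * g p + f p * dz σ g p := by
  simp only [dz, fderiv_fun_mul hf hg, ContinuousLinearMap.add_apply,
    ContinuousLinearMap.smul_apply, smul_eq_mul]
  ring

lemma dzb_mul (hf : DifferentiableAt ℝ f p) (hg : DifferentiableAt ℝ g p) :
    dzb σ (fun x => f x * g x) p = dzb σ f p * g p + f p * dzb σ g p := by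
  simp only [dzb, fderiv_fun_mul hf hg, ContinuousLinearMap.add_apply,
    ContinuousLinearMap.smul_apply, smul_eq_mul]
  ring

lemma dv_const_mul (hf : DifferentiableAt ℝ f p) (c : ℂ) :
    dv σ (fun x => c * f x) p = c * dv σ f p := by
  simp only [dv, fderiv_const_mul hf c, ContinuousLinearMap.smul_apply, smul_eq_mul]
  ring

lemma dvb_const_mul (hf : DifferentiableAt ℝ f p) (c : ℂ) :
    dvb σ (fun x => c * f x) p = c * dvb σ f p := by
  simp only [dvb, fderiv_const_mul hf c, ContinuousLinearMap.smul_apply, smul_eq_mul]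
  ring

lemma dz_const_mul (hf : DifferentiableAt ℝ f p) (c : ℂ) :
    dz σ (fun x => c * f x) p = c * dz σ f p := by
  simp only [dz, fderiv_const_mul hf c, ContinuousLinearMap.smul_apply, smul_eq_mul]
  ring

lemma dzb_const_mul (hf : DifferentiableAt ℝ f p) (c : ℂ) :
    dzb σ (fun x => c * f x) p = c * dzb σ f p := by
  simp only [dzb, fderiv_const_mul hf c, ContinuousLinearMap.smul_apply, smul_eq_mul]
  ring

lemma dv_add (hf : DifferentiableAt ℝ f p) (hg : DifferentiableAt ℝ g p) :
    dv σ (fun x => f x + g x) p = dv σ f p + dv σ g p := by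
  simp only [dv, fderiv_fun_add hf hg, ContinuousLinearMap.add_apply]
  ring

lemma dvb_add (hf : DifferentiableAt ℝ f p) (hg : DifferentiableAt ℝ g p) :
    dvb σ (fun x => f x + g x) p = dvb σ f p + dvb σ g p := by
  simp only [dvb, fderiv_fun_add hf hg, ContinuousLinearMap.add_apply]
  ring

lemma dz_add (hf : DifferentiableAt ℝ f p) (hg : DifferentiableAt ℝ g p) :
    dz σ (fun x => f x + g x) p = dz σ f p + dz σ g p := by
  simp only [dz, fderiv_fun_add hf hg, ContinuousLinearMap.add_apply]
  ring

lemma dzb_add (hf : DifferentiableAt ℝ f p) (hg : DifferentiableAt ℝ g p) :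
    dzb σ (fun x => f x + g x) p = dzb σ f p + dzb σ g p := by
  simp only [dzb, fderiv_fun_add hf hg, ContinuousLinearMap.add_apply]
  ring

/-- Derivatives only see germs: congruence on the open slit. -/
lemma fderiv_slit_congr (h : Set.EqOn f g (slit n)) (hp : p ∈ slit n) :
    fderiv ℝ f p = fderiv ℝ g p :=
  Filter.EventuallyEq.fderiv_eq
    (Filter.eventuallyEq_of_mem (isOpen_slit.mem_nhds hp) h)

lemma dv_slit_congr (h : Set.EqOn f g (slit n)) (hp : p ∈ slit n) :
    dv σ f p = dv σ g p := by simp only [dv, fderiv_slit_congr h hp]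

lemma dvb_slit_congr (h : Set.EqOn f g (slit n)) (hp : p ∈ slit n) :
    dvb σ f p = dvb σ g p := by simp only [dvb, fderiv_slit_congr h hp]

lemma dz_slit_congr (h : Set.EqOn f g (slit n)) (hp : p ∈ slit n) :
    dz σ f p = dz σ g p := by simp only [dz, fderiv_slit_congr h hp]

lemma dzb_slit_congr (h : Set.EqOn f g (slit n)) (hp : p ∈ slit n) :
    dzb σ f p = dzb σ g p := by simp only [dzb, fderiv_slit_congr h hp]

/-- Composition with the projection to the base. -/
lemma fderiv_base {h : (Fin n → ℂ) → ℂ} (hd : DifferentiableAt ℝ h p.1) :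
    fderiv ℝ (fun x : Pt n => h x.1) p
      = (fderiv ℝ h p.1).comp (ContinuousLinearMap.fst ℝ (Fin n → ℂ) (Fin n → ℂ)) := by
  exact (hd.hasFDerivAt.comp p
    ((ContinuousLinearMap.fst ℝ (Fin n → ℂ) (Fin n → ℂ)).hasFDerivAt)).fderiv

lemma dv_base {h : (Fin n → ℂ) → ℂ} (hd : DifferentiableAt ℝ h p.1) :
    dv σ (fun x : Pt n => h x.1) p = 0 := by
  simp [dv, fderiv_base hd]

lemma dvb_base {h : (Fin n → ℂ) → ℂ} (hd : DifferentiableAt ℝ h p.1) :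
    dvb σ (fun x : Pt n => h x.1) p = 0 := by
  simp [dvb, fderiv_base hd]

lemma dz_base {h : (Fin n → ℂ) → ℂ} (hd : DifferentiableAt ℝ h p.1) :
    dz μ (fun x : Pt n => h x.1) p = bdz μ h p.1 := by
  simp [dz, bdz, fderiv_base hd]

lemma dzb_base {h : (Fin n → ℂ) → ℂ} (hd : DifferentiableAt ℝ h p.1) :
    dzb ν (fun x : Pt n => h x.1) p = bdzb ν h p.1 := by
  simp [dzb, bdzb, fderiv_base hd]

lemma diffAt_base {h : (Fin n → ℂ) → ℂ} (hd : DifferentiableAt ℝ h p.1) :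
    DifferentiableAt ℝ (fun x : Pt n => h x.1) p :=
  hd.comp p differentiable_fst.differentiableAt

end Rules

section Scaling

variable {f : Pt n → ℂ} {p : Pt n} {σ μ ν : Fin n} {ζ : ℂ}

/-- The fibre scaling `(z, v) ↦ (z, ζ • v)` as a continuous `ℝ`-linear map. -/
def scl (ζ : ℂ) : Pt n →L[ℝ] Pt n :=
  (ContinuousLinearMap.fst ℝ (Fin n → ℂ) (Fin n → ℂ)).prod
    (ζ • ContinuousLinearMap.snd ℝ (Fin n → ℂ) (Fin n → ℂ))

@[simp] lemma scl_apply (ζ : ℂ) (p : Pt n) : (scl (n := n) ζ) p = (p.1, ζ • p.2) := rfl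

lemma fderiv_comp_scl (hf : DifferentiableAt ℝ f ((p.1, ζ • p.2) : Pt n)) :
    fderiv ℝ (fun x : Pt n => f (x.1, ζ • x.2)) p
      = (fderiv ℝ f ((p.1, ζ • p.2) : Pt n)).comp (scl ζ) :=
  (hf.hasFDerivAt.comp p (scl ζ).hasFDerivAt).fderiv

lemma smul_single (ζ c : ℂ) (σ : Fin n) :
    ζ • (Pi.single σ c : Fin n → ℂ) = Pi.single σ (ζ * c) := by
  funext τ
  rcases eq_or_ne τ σ with h | h <;> simp [Pi.single_apply, h]

lemma fderiv_scl_v (hf : DifferentiableAt ℝ f ((p.1, ζ • p.2) : Pt n)) (c : ℂ) :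
    fderiv ℝ (fun x : Pt n => f (x.1, ζ • x.2)) p
        (((0 : Fin n → ℂ), (Pi.single σ c : Fin n → ℂ)) : Pt n)
      = dv σ f ((p.1, ζ • p.2) : Pt n) * (ζ * c)
        + dvb σ f ((p.1, ζ • p.2) : Pt n) * conj (ζ * c) := by
  rw [fderiv_comp_scl hf]
  have h : (scl (n := n) ζ) (((0 : Fin n → ℂ), (Pi.single σ c : Fin n → ℂ)) : Pt n)
      = (((0 : Fin n → ℂ), (Pi.single σ (ζ * c) : Fin n → ℂ)) : Pt n) := by
    simp [smul_single]
  rw [ContinuousLinearMap.comp_apply, h, fderiv_v_single hf]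

lemma fderiv_scl_z (hf : DifferentiableAt ℝ f ((p.1, ζ • p.2) : Pt n)) (w : Fin n → ℂ) :
    fderiv ℝ (fun x : Pt n => f (x.1, ζ • x.2)) p ((w, (0 : Fin n → ℂ)) : Pt n)
      = fderiv ℝ f ((p.1, ζ • p.2) : Pt n) ((w, (0 : Fin n → ℂ)) : Pt n) := by
  rw [fderiv_comp_scl hf]
  have h : (scl (n := n) ζ) ((w, (0 : Fin n → ℂ)) : Pt n) = ((w, (0 : Fin n → ℂ)) : Pt n) := by
    simp
  rw [ContinuousLinearMap.comp_apply, h]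

lemma dv_comp_scl (hf : DifferentiableAt ℝ f ((p.1, ζ • p.2) : Pt n)) :
    dv σ (fun x : Pt n => f (x.1, ζ • x.2)) p = ζ * dv σ f ((p.1, ζ • p.2) : Pt n) := by
  simp only [dv, dvb, fderiv_scl_v hf, map_mul, Complex.conj_I, mul_one]
  linear_combination ((1/4 : ℂ) *
    ((fderiv ℝ f ((p.1, ζ • p.2) : Pt n))
        (((0 : Fin n → ℂ), (Pi.single σ Complex.I : Fin n → ℂ)) : Pt n) * Complex.I *
          (conj ζ + ζ) +
      (fderiv ℝ f ((p.1, ζ • p.2) : Pt n))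
        (((0 : Fin n → ℂ), (Pi.single σ (1:ℂ) : Fin n → ℂ)) : Pt n) * (conj ζ - ζ))) *
    Complex.I_mul_I

lemma dvb_comp_scl (hf : DifferentiableAt ℝ f ((p.1, ζ • p.2) : Pt n)) :
    dvb σ (fun x : Pt n => f (x.1, ζ • x.2)) p = conj ζ * dvb σ f ((p.1, ζ • p.2) : Pt n) := by
  simp only [dv, dvb, fderiv_scl_v hf, map_mul, Complex.conj_I, mul_one]
  linear_combination (-(1/4 : ℂ) *
    ((fderiv ℝ f ((p.1, ζ • p.2) : Pt n))
        (((0 : Fin n → ℂ), (Pi.single σ Complex.I : Fin n → ℂ)) : Pt n) * Complex.I *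
          (conj ζ + ζ) +
      (fderiv ℝ f ((p.1, ζ • p.2) : Pt n))
        (((0 : Fin n → ℂ), (Pi.single σ (1:ℂ) : Fin n → ℂ)) : Pt n) * (conj ζ - ζ))) *
    Complex.I_mul_I

lemma dz_comp_scl (hf : DifferentiableAt ℝ f ((p.1, ζ • p.2) : Pt n)) :
    dz μ (fun x : Pt n => f (x.1, ζ • x.2)) p = dz μ f ((p.1, ζ • p.2) : Pt n) := by
  simp only [dz, fderiv_scl_z hf]

lemma dzb_comp_scl (hf : DifferentiableAt ℝ f ((p.1, ζ • p.2) : Pt n)) :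
    dzb ν (fun x : Pt n => f (x.1, ζ • x.2)) p = dzb ν f ((p.1, ζ • p.2) : Pt n) := by
  simp only [dzb, fderiv_scl_z hf]

end Scaling

section Homogeneity

/-- `f` is smooth on the slit bundle and `(a, b)`-homogeneous in the fibre. -/
def Homog (a b : ℤ) (f : Pt n → ℂ) : Prop :=
  ContDiffOn ℝ ∞ f (slit n) ∧
  ∀ (z v : Fin n → ℂ) (ζ : ℂ), ζ ≠ 0 → v ≠ 0 →
    f (z, ζ • v) = ζ ^ a * (conj ζ) ^ b * f (z, v)

variable {a b c d : ℤ} {f g : Pt n → ℂ}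

lemma mem_slit_scale {z v : Fin n → ℂ} {ζ : ℂ} (hζ : ζ ≠ 0) (hv : v ≠ 0) :
    ((z, ζ • v) : Pt n) ∈ slit n := by
  simpa [slit] using smul_ne_zero hζ hv

lemma conj_ne_zero {ζ : ℂ} (hζ : ζ ≠ 0) : conj ζ ≠ 0 := by
  simpa using hζ

lemma Homog.of_eq (hf : Homog a b f) (ha : a = c) (hb : b = d) : Homog c d f := by
  subst ha; subst hb; exact hf

theorem Homog.dz (hf : Homog a b f) (μ : Fin n) : Homog a b (CFG.dz μ f) := by
  refine ⟨smoothOn_dz hf.1 μ, fun z v ζ hζ hv => ?_⟩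
  have hq : ((z, ζ • v) : Pt n) ∈ slit n := mem_slit_scale hζ hv
  have hdq : DifferentiableAt ℝ f (z, ζ • v) := diffAt hf.1 hq
  have hp : ((z, v) : Pt n) ∈ slit n := hv
  have h1 : CFG.dz μ (fun x : Pt n => f (x.1, ζ • x.2)) (z, v) = CFG.dz μ f (z, ζ • v) :=
    dz_comp_scl (p := ((z, v) : Pt n)) (ζ := ζ) hdq
  have h2 : CFG.dz μ (fun x : Pt n => f (x.1, ζ • x.2)) (z, v)
      = CFG.dz μ (fun x => ζ ^ a * (conj ζ) ^ b * f x) (z, v) := by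
    refine dz_slit_congr (fun x hx => ?_) hp
    have : ((x.1, ζ • x.2) : Pt n) = (x.1, ζ • x.2) := rfl
    exact hf.2 x.1 x.2 ζ hζ hx
  have h3 : CFG.dz μ (fun x => ζ ^ a * (conj ζ) ^ b * f x) (z, v)
      = ζ ^ a * (conj ζ) ^ b * CFG.dz μ f (z, v) := dz_const_mul (diffAt hf.1 hp) _
  rw [← h1, h2, h3]

theorem Homog.dzb (hf : Homog a b f) (ν : Fin n) : Homog a b (CFG.dzb ν f) := by
  refine ⟨smoothOn_dzb hf.1 ν, fun z v ζ hζ hv => ?_⟩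
  have hq : ((z, ζ • v) : Pt n) ∈ slit n := mem_slit_scale hζ hv
  have hdq : DifferentiableAt ℝ f (z, ζ • v) := diffAt hf.1 hq
  have hp : ((z, v) : Pt n) ∈ slit n := hv
  have h1 : CFG.dzb ν (fun x : Pt n => f (x.1, ζ • x.2)) (z, v) = CFG.dzb ν f (z, ζ • v) :=
    dzb_comp_scl (p := ((z, v) : Pt n)) (ζ := ζ) hdq
  have h2 : CFG.dzb ν (fun x : Pt n => f (x.1, ζ • x.2)) (z, v)
      = CFG.dzb ν (fun x => ζ ^ a * (conj ζ) ^ b * f x) (z, v) :=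
    dzb_slit_congr (fun x hx => hf.2 x.1 x.2 ζ hζ hx) hp
  have h3 : CFG.dzb ν (fun x => ζ ^ a * (conj ζ) ^ b * f x) (z, v)
      = ζ ^ a * (conj ζ) ^ b * CFG.dzb ν f (z, v) := dzb_const_mul (diffAt hf.1 hp) _
  rw [← h1, h2, h3]

theorem Homog.dv (hf : Homog a b f) (σ : Fin n) : Homog (a - 1) b (CFG.dv σ f) := by
  refine ⟨smoothOn_dv hf.1 σ, fun z v ζ hζ hv => ?_⟩
  have hq : ((z, ζ • v) : Pt n) ∈ slit n := mem_slit_scale hζ hv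
  have hdq : DifferentiableAt ℝ f (z, ζ • v) := diffAt hf.1 hq
  have hp : ((z, v) : Pt n) ∈ slit n := hv
  have h1 : CFG.dv σ (fun x : Pt n => f (x.1, ζ • x.2)) (z, v) = ζ * CFG.dv σ f (z, ζ • v) :=
    dv_comp_scl (p := ((z, v) : Pt n)) (ζ := ζ) hdq
  have h2 : CFG.dv σ (fun x : Pt n => f (x.1, ζ • x.2)) (z, v)
      = CFG.dv σ (fun x => ζ ^ a * (conj ζ) ^ b * f x) (z, v) :=
    dv_slit_congr (fun x hx => hf.2 x.1 x.2 ζ hζ hx) hp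
  have h3 : CFG.dv σ (fun x => ζ ^ a * (conj ζ) ^ b * f x) (z, v)
      = ζ ^ a * (conj ζ) ^ b * CFG.dv σ f (z, v) := dv_const_mul (diffAt hf.1 hp) _
  have := h1.symm.trans (h2.trans h3)
  rw [zpow_sub_one₀ hζ]
  field_simp at this ⊢
  linear_combination this

theorem Homog.dvb (hf : Homog a b f) (σ : Fin n) : Homog a (b - 1) (CFG.dvb σ f) := by
  refine ⟨smoothOn_dvb hf.1 σ, fun z v ζ hζ hv => ?_⟩
  have hq : ((z, ζ • v) : Pt n) ∈ slit n := mem_slit_scale hζ hv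
  have hdq : DifferentiableAt ℝ f (z, ζ • v) := diffAt hf.1 hq
  have hp : ((z, v) : Pt n) ∈ slit n := hv
  have h1 : CFG.dvb σ (fun x : Pt n => f (x.1, ζ • x.2)) (z, v) = conj ζ * CFG.dvb σ f (z, ζ • v) :=
    dvb_comp_scl (p := ((z, v) : Pt n)) (ζ := ζ) hdq
  have h2 : CFG.dvb σ (fun x : Pt n => f (x.1, ζ • x.2)) (z, v)
      = CFG.dvb σ (fun x => ζ ^ a * (conj ζ) ^ b * f x) (z, v) :=
    dvb_slit_congr (fun x hx => hf.2 x.1 x.2 ζ hζ hx) hp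
  have h3 : CFG.dvb σ (fun x => ζ ^ a * (conj ζ) ^ b * f x) (z, v)
      = ζ ^ a * (conj ζ) ^ b * CFG.dvb σ f (z, v) := dvb_const_mul (diffAt hf.1 hp) _
  have := h1.symm.trans (h2.trans h3)
  rw [zpow_sub_one₀ (conj_ne_zero hζ)]
  have hc := conj_ne_zero hζ
  field_simp at this ⊢
  linear_combination this

theorem Homog.mul (hf : Homog a b f) (hg : Homog c d g) :
    Homog (a + c) (b + d) (fun p => f p * g p) := by
  refine ⟨hf.1.mul hg.1, fun z v ζ hζ hv => ?_⟩
  show f (z, ζ • v) * g (z, ζ • v) = _ * (f (z, v) * g (z, v))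
  rw [hf.2 z v ζ hζ hv, hg.2 z v ζ hζ hv, zpow_add₀ hζ, zpow_add₀ (conj_ne_zero hζ)]
  ring

theorem Homog.sub (hf : Homog a b f) (hg : Homog a b g) :
    Homog a b (fun p => f p - g p) := by
  refine ⟨hf.1.sub hg.1, fun z v ζ hζ hv => ?_⟩
  show f (z, ζ • v) - g (z, ζ • v) = _ * (f (z, v) - g (z, v))
  rw [hf.2 z v ζ hζ hv, hg.2 z v ζ hζ hv]
  ring

theorem Homog.sum {ι : Type*} {s : Finset ι} {f : ι → Pt n → ℂ}
    (h : ∀ i ∈ s, Homog a b (f i)) : Homog a b (fun p => ∑ i ∈ s, f i p) := by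
  refine ⟨ContDiffOn.sum fun i hi => (h i hi).1, fun z v ζ hζ hv => ?_⟩
  show (∑ i ∈ s, f i (z, ζ • v)) = _ * ∑ i ∈ s, f i (z, v)
  rw [Finset.mul_sum]
  exact Finset.sum_congr rfl fun i hi => (h i hi).2 z v ζ hζ hv

/-- Euler identities for homogeneous functions. -/
theorem Homog.euler (hf : Homog a b f) {p : Pt n} (hp : p ∈ slit n) :
    (∑ σ, p.2 σ * CFG.dv σ f p) = (a : ℂ) * f p ∧
      (∑ σ, conj (p.2 σ) * CFG.dvb σ f p) = (b : ℂ) * f p := by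
  classical
  have hdp : DifferentiableAt ℝ f p := diffAt hf.1 hp
  -- the affine curve ζ ↦ (p.1, ζ • p.2) and its derivative
  set L : ℂ →L[ℝ] Pt n :=
    ((0 : ℂ →L[ℝ] (Fin n → ℂ))).prod
      ((ContinuousLinearMap.id ℝ ℂ).smulRight p.2) with hL
  have hLa : ∀ w : ℂ, L w = ((0 : Fin n → ℂ), w • p.2) := fun w => rfl
  have hA : ∀ ζ₀ : ℂ, HasFDerivAt (fun ζ : ℂ => ((p.1, ζ • p.2) : Pt n)) L ζ₀ := by
    intro ζ₀
    have : (fun ζ : ℂ => ((p.1, ζ • p.2) : Pt n))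
        = fun ζ : ℂ => ((p.1, (0 : Fin n → ℂ)) : Pt n) + L ζ := by
      funext ζ
      simp [hLa, Prod.ext_iff]
    rw [this]
    exact (L.hasFDerivAt).const_add _
  have hg : HasFDerivAt (fun ζ : ℂ => f (p.1, ζ • p.2)) ((fderiv ℝ f p).comp L) 1 := by
    have h1 : ((p.1, (1:ℂ) • p.2) : Pt n) = p := by simp
    have hdp' : HasFDerivAt f (fderiv ℝ f p) ((p.1, (1:ℂ) • p.2) : Pt n) := by
      rw [h1]; exact hdp.hasFDerivAt
    exact HasFDerivAt.comp (1:ℂ) hdp' (hA 1)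
  -- the model function and its derivative
  have hu : HasFDerivAt (fun ζ : ℂ => ζ ^ a)
      ((ContinuousLinearMap.smulRight (1 : ℂ →L[ℂ] ℂ) ((a : ℂ))).restrictScalars ℝ) 1 := by
    have h := hasDerivAt_zpow a (1:ℂ) (Or.inl one_ne_zero)
    simp only [one_zpow, mul_one] at h
    exact (hasDerivAt_iff_hasFDerivAt.mp h).restrictScalars ℝ
  have hcj : HasFDerivAt (fun ζ : ℂ => (conj ζ : ℂ))
      (Complex.conjCLE : ℂ ≃L[ℝ] ℂ).toContinuousLinearMap 1 := by
    have h := (Complex.conjCLE : ℂ ≃L[ℝ] ℂ).hasFDerivAt (x := (1:ℂ))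
    have he : (⇑(Complex.conjCLE : ℂ ≃L[ℝ] ℂ) : ℂ → ℂ) = fun ζ : ℂ => (conj ζ : ℂ) := by
      funext ζ; exact Complex.conjCLE_apply ζ
    rwa [he] at h
  have hb0 : HasFDerivAt (fun w : ℂ => w ^ b)
      ((ContinuousLinearMap.smulRight (1 : ℂ →L[ℂ] ℂ) ((b : ℂ))).restrictScalars ℝ)
      (conj (1:ℂ)) := by
    rw [map_one]
    have h := hasDerivAt_zpow b (1:ℂ) (Or.inl one_ne_zero)
    simp only [one_zpow, mul_one] at h
    exact (hasDerivAt_iff_hasFDerivAt.mp h).restrictScalars ℝ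
  have hv2 : HasFDerivAt (fun ζ : ℂ => (conj ζ) ^ b)
      (((ContinuousLinearMap.smulRight (1 : ℂ →L[ℂ] ℂ) ((b : ℂ))).restrictScalars ℝ).comp
        (Complex.conjCLE : ℂ ≃L[ℝ] ℂ).toContinuousLinearMap) 1 :=
    HasFDerivAt.comp (1:ℂ) hb0 hcj
  have Hm := (hu.mul hv2).mul_const (f p)
  -- the two functions agree near 1
  have hev : (fun ζ : ℂ => f (p.1, ζ • p.2))
      =ᶠ[nhds (1:ℂ)] (fun ζ : ℂ => ζ ^ a * (conj ζ) ^ b * f p) := by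
    filter_upwards [isOpen_compl_singleton.mem_nhds
      (by simp : (1:ℂ) ∈ ({(0:ℂ)}ᶜ : Set ℂ))] with ζ hζ
    have := hf.2 p.1 p.2 ζ (by simpa using hζ) hp
    simpa using this
  have hfd := hg.fderiv
  have hmd := Hm.fderiv
  have hDeq : (fderiv ℝ f p).comp L
      = fderiv ℝ (fun ζ : ℂ => ζ ^ a * (conj ζ) ^ b * f p) (1:ℂ) := by
    rw [← hfd, hev.fderiv_eq]
  rw [show fderiv ℝ (fun ζ : ℂ => ζ ^ a * (conj ζ) ^ b * f p) (1:ℂ) = _ from hmd] at hDeq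
  -- evaluate in the directions `1` and `I`
  set P := ∑ σ, p.2 σ * CFG.dv σ f p with hP
  set Q := ∑ σ, conj (p.2 σ) * CFG.dvb σ f p with hQ
  have hLval : ∀ w : ℂ, ((fderiv ℝ f p).comp L) w = w * P + conj w * Q := by
    intro w
    have h0 : ((fderiv ℝ f p).comp L) w
        = fderiv ℝ f p (((0 : Fin n → ℂ), w • p.2) : Pt n) := rfl
    rw [h0, fderiv_v hdp, hP, hQ, Finset.mul_sum, Finset.mul_sum,
      ← Finset.sum_add_distrib]
    refine Finset.sum_congr rfl fun σ _ => ?_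
    simp only [Pi.smul_apply, smul_eq_mul, map_mul]
    ring
  have hMval : ∀ w : ℂ,
      (f p • ((1:ℂ) ^ a • (((ContinuousLinearMap.smulRight (1 : ℂ →L[ℂ] ℂ)
              ((b : ℂ))).restrictScalars ℝ).comp
            (Complex.conjCLE : ℂ ≃L[ℝ] ℂ).toContinuousLinearMap)
          + (conj (1:ℂ)) ^ b • (ContinuousLinearMap.smulRight (1 : ℂ →L[ℂ] ℂ)
              ((a : ℂ))).restrictScalars ℝ)) w
        = ((a:ℂ) * w + (b:ℂ) * conj w) * f p := by
    intro w
    simp only [ContinuousLinearMap.smul_apply, ContinuousLinearMap.add_apply,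
      ContinuousLinearMap.coe_restrictScalars', ContinuousLinearMap.comp_apply,
      ContinuousLinearMap.smulRight_apply, ContinuousLinearMap.one_apply,
      ContinuousLinearEquiv.coe_coe, Complex.conjCLE_apply, map_one, one_zpow,
      smul_eq_mul, one_mul]
    ring
  have e1 : (1:ℂ) * P + conj (1:ℂ) * Q = ((a:ℂ) * 1 + (b:ℂ) * conj (1:ℂ)) * f p := by
    rw [← hLval 1, hDeq]
    exact hMval 1
  have eI : Complex.I * P + conj Complex.I * Q
      = ((a:ℂ) * Complex.I + (b:ℂ) * conj Complex.I) * f p := by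
    rw [← hLval Complex.I, hDeq]
    exact hMval Complex.I
  simp only [map_one, one_mul, mul_one, Complex.conj_I] at e1 eI
  have h2 : P - Q = ((a:ℂ) - (b:ℂ)) * f p := by
    apply mul_left_cancel₀ Complex.I_ne_zero
    linear_combination eI
  constructor
  · linear_combination ((1:ℂ)/2) * e1 + ((1:ℂ)/2) * h2
  · linear_combination ((1:ℂ)/2) * e1 - ((1:ℂ)/2) * h2

end Homogeneity

section Metric

variable (F : SPCF n)

lemma smooth_Gc : ContDiffOn ℝ ∞ F.Gc (slit n) :=
  Complex.ofRealCLM.contDiff.comp_contDiffOn (F.smoothG.of_le (by simp))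

lemma homog_Gc : Homog 1 1 F.Gc := by
  refine ⟨smooth_Gc F, fun z v ζ hζ hv => ?_⟩
  have h := F.homogG z v ζ
  show ((F.G (z, ζ • v) : ℝ) : ℂ) = _ * ((F.G (z, v) : ℝ) : ℂ)
  rw [h]
  push_cast
  rw [zpow_one, zpow_one, Complex.mul_conj]
  congr 1
  exact_mod_cast Complex.sq_norm ζ

lemma homog_Gm (α β : Fin n) : Homog 0 0 (F.Gm α β) := by
  have h : F.Gm α β = CFG.dv α (CFG.dvb β F.Gc) := rfl
  rw [h]
  exact (((homog_Gc F).dvb β).dv α).of_eq (by norm_num) (by norm_num)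

lemma smoothOn_Gm (α β : Fin n) : ContDiffOn ℝ ∞ (F.Gm α β) (slit n) := (homog_Gm F α β).1

lemma levi_det_ne_zero {p : Pt n} (hp : p ∈ slit n) : (F.Levi p).det ≠ 0 := by
  intro h0
  obtain ⟨u, hu, hMu⟩ := (Matrix.exists_mulVec_eq_zero_iff).mpr h0
  set w : Fin n → ℂ := fun i => conj (u i) with hwdef
  have hw : w ≠ 0 := by
    intro hw0
    apply hu
    funext i
    have := congrFun hw0 i
    simpa [hwdef] using this
  obtain ⟨hre, _⟩ := F.posdef p hp w hw
  have hz : (∑ α, ∑ β, levi F.G α β p * w α * conj (w β)) = 0 := by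
    refine Finset.sum_eq_zero fun α _ => ?_
    have h1 : ∑ β, levi F.G α β p * w α * conj (w β)
        = w α * ((F.Levi p).mulVec u α) := by
      simp only [Matrix.mulVec, dotProduct, Finset.mul_sum]
      refine Finset.sum_congr rfl fun β _ => ?_
      have hle : (F.Levi p) α β = levi F.G α β p := rfl
      rw [hle, hwdef]
      simp only [Complex.conj_conj]
      ring
    rw [h1, hMu]
    simp
  rw [hz] at hre
  simp at hre

lemma levi_mul_inv {p : Pt n} (hp : p ∈ slit n) : F.Levi p * (F.Levi p)⁻¹ = 1 :=
  Matrix.mul_nonsing_inv _ (isUnit_iff_ne_zero.mpr (levi_det_ne_zero F hp))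

lemma sum_Gm_Ginv {p : Pt n} (hp : p ∈ slit n) (β α : Fin n) :
    ∑ l, F.Gm β l p * F.Ginv l α p = if β = α then 1 else 0 := by
  have h := congrFun (congrFun (levi_mul_inv F hp) β) α
  rw [Matrix.mul_apply] at h
  have h2 : ∀ l, (F.Levi p) β l * (F.Levi p)⁻¹ l α = F.Gm β l p * F.Ginv l α p :=
    fun l => rfl
  rw [Finset.sum_congr rfl fun l _ => h2 l] at h
  rw [h, Matrix.one_apply]

lemma smoothOn_det_levi : ContDiffOn ℝ ∞ (fun p => (F.Levi p).det) (slit n) := by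
  have h : (fun p => (F.Levi p).det)
      = fun p => ∑ σ : Equiv.Perm (Fin n),
          ((Equiv.Perm.sign σ : ℤ) : ℂ) * ∏ i, F.Gm (σ i) i p := by
    funext p
    rw [Matrix.det_apply]
    refine Finset.sum_congr rfl fun σ _ => ?_
    simp only [Units.smul_def, zsmul_eq_mul]
    rfl
  rw [h]
  refine ContDiffOn.sum fun σ _ => contDiffOn_const.mul ?_
  exact contDiffOn_prod fun i _ => smoothOn_Gm F (σ i) i

lemma smoothOn_adj_levi (l α : Fin n) :
    ContDiffOn ℝ ∞ (fun p => (F.Levi p).adjugate l α) (slit n) := by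
  have h : (fun p => (F.Levi p).adjugate l α)
      = fun p => ∑ σ : Equiv.Perm (Fin n), ((Equiv.Perm.sign σ : ℤ) : ℂ) *
          ∏ i, (if σ i = α then (Pi.single l 1 : Fin n → ℂ) i else F.Gm (σ i) i p) := by
    funext p
    rw [Matrix.adjugate_apply, Matrix.det_apply]
    refine Finset.sum_congr rfl fun σ _ => ?_
    simp only [Units.smul_def, zsmul_eq_mul, Matrix.updateRow_apply]
    rfl
  rw [h]
  refine ContDiffOn.sum fun σ _ => contDiffOn_const.mul ?_
  refine contDiffOn_prod fun i _ => ?_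
  by_cases hc : σ i = α
  · simp only [hc, if_true]
    exact contDiffOn_const
  · simp only [hc, if_false]
    exact smoothOn_Gm F (σ i) i

lemma smoothOn_Ginv (l α : Fin n) : ContDiffOn ℝ ∞ (F.Ginv l α) (slit n) := by
  have h : ∀ p ∈ slit n, F.Ginv l α p
      = (F.Levi p).det⁻¹ * (F.Levi p).adjugate l α := by
    intro p hp
    have : F.Ginv l α p = (F.Levi p)⁻¹ l α := rfl
    rw [this, Matrix.inv_def, Matrix.smul_apply, Ring.inverse_eq_inv', smul_eq_mul]
  exact ContDiffOn.congr
    (((smoothOn_det_levi F).inv fun p hp => levi_det_ne_zero F hp).mul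
      (smoothOn_adj_levi F l α)) h

lemma levi_scale {z v : Fin n → ℂ} {ζ : ℂ} (hζ : ζ ≠ 0) (hv : v ≠ 0) :
    F.Levi ((z, ζ • v) : Pt n) = F.Levi ((z, v) : Pt n) := by
  ext α β
  have h := (homog_Gm F α β).2 z v ζ hζ hv
  simpa [SPCF.Levi] using h

lemma homog_Ginv (l α : Fin n) : Homog 0 0 (F.Ginv l α) := by
  refine ⟨smoothOn_Ginv F l α, fun z v ζ hζ hv => ?_⟩
  have : F.Ginv l α ((z, ζ • v) : Pt n) = F.Ginv l α ((z, v) : Pt n) := by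
    show (F.Levi ((z, ζ • v) : Pt n))⁻¹ l α = (F.Levi ((z, v) : Pt n))⁻¹ l α
    rw [levi_scale F hζ hv]
  simpa using this

lemma homog_Γ0 (α μ : Fin n) : Homog 1 0 (F.Γ0 α μ) := by
  have h : F.Γ0 α μ = fun p => ∑ l, F.Ginv l α p * CFG.dz μ (CFG.dvb l F.Gc) p := rfl
  rw [h]
  refine Homog.sum fun l _ => ?_
  exact ((homog_Ginv F l α).mul (((homog_Gc F).dvb l).dz μ)).of_eq (by norm_num) (by norm_num)

lemma homog_deltah {a b : ℤ} {f : Pt n → ℂ} (hf : Homog a b f) (μ : Fin n) :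
    Homog a b (F.δh μ f) := by
  have h : F.δh μ f = fun p => CFG.dz μ f p - ∑ α, F.Γ0 α μ p * CFG.dv α f p := rfl
  rw [h]
  refine (hf.dz μ).sub (Homog.sum fun α _ => ?_)
  exact ((homog_Γ0 F α μ).mul (hf.dv α)).of_eq (by ring) (by ring)

lemma homog_Γh (α β μ : Fin n) : Homog 0 0 (F.Γh α β μ) := by
  have h : F.Γh α β μ = fun p => ∑ l, F.Ginv l α p * F.δh μ (F.Gm β l) p := rfl
  rw [h]
  refine Homog.sum fun l _ => ?_
  exact ((homog_Ginv F l α).mul (homog_deltah F (homog_Gm F β l) μ)).of_eq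
    (by norm_num) (by norm_num)

/-- Euler identity `G_{λ̄} = v^β G_{βλ̄}` repackaged: `G^{λ̄α} G_{λ̄} = v^α`. -/
lemma E1 (α : Fin n) {p : Pt n} (hp : p ∈ slit n) :
    ∑ l, F.Ginv l α p * CFG.dvb l F.Gc p = p.2 α := by
  have h1 : ∀ l, CFG.dvb l F.Gc p = ∑ σ, p.2 σ * F.Gm σ l p := by
    intro l
    have h := (((homog_Gc F).dvb l).of_eq (c := 1) (d := 0) rfl (by norm_num)).euler hp |>.1
    simp only [Int.cast_one, one_mul] at h
    exact h.symm
  calc ∑ l, F.Ginv l α p * CFG.dvb l F.Gc p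
      = ∑ l, ∑ σ, p.2 σ * (F.Gm σ l p * F.Ginv l α p) := by
        refine Finset.sum_congr rfl fun l _ => ?_
        rw [h1 l, Finset.mul_sum]
        exact Finset.sum_congr rfl fun σ _ => by ring
    _ = ∑ σ, p.2 σ * ∑ l, F.Gm σ l p * F.Ginv l α p := by
        rw [Finset.sum_comm]
        exact Finset.sum_congr rfl fun σ _ => by rw [Finset.mul_sum]
    _ = p.2 α := by
        simp only [sum_Gm_Ginv F hp]
        simp [mul_ite]

/-- `Γ^α_{β;μ}` is `(0,0)`-homogeneous: conjugate Euler gives `0`. -/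
lemma E2 (α β μ : Fin n) {p : Pt n} (hp : p ∈ slit n) :
    ∑ σ, conj (p.2 σ) * CFG.dvb σ (F.Γh α β μ) p = 0 := by
  have h := (homog_Γh F α β μ).euler hp |>.2
  simpa using h

/-- `G_{βλ̄}` is `(0,0)`-homogeneous: Euler gives `0`. -/
lemma E3 (β l : Fin n) {p : Pt n} (hp : p ∈ slit n) :
    ∑ σ, p.2 σ * CFG.dv σ (F.Gm β l) p = 0 := by
  have h := (homog_Gm F β l).euler hp |>.1
  simpa using h

end Metric

section Conformal

/-- `ρ` as a complex-valued function. -/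
def rc (ρ : (Fin n → ℂ) → ℝ) : (Fin n → ℂ) → ℂ := fun z => ((ρ z : ℝ) : ℂ)

/-- The conformal factor `e^ρ` as a complex-valued function. -/
def cexpρ (ρ : (Fin n → ℂ) → ℝ) : (Fin n → ℂ) → ℂ := fun z => Complex.exp (rc ρ z)

variable {F Ft : SPCF n} {ρ : (Fin n → ℂ) → ℝ}

lemma smooth_rc (hρ : ContDiff ℝ ∞ (rc ρ)) : True := trivial

lemma smooth_cexpρ (hρ : ContDiff ℝ ∞ (rc ρ)) : ContDiff ℝ ∞ (cexpρ ρ) :=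
  Complex.contDiff_exp.comp hρ

lemma cexpρ_ne_zero (z : Fin n → ℂ) : cexpρ ρ z ≠ 0 := Complex.exp_ne_zero _

lemma bdz_cexpρ (hρ : ContDiff ℝ ∞ (rc ρ)) (μ : Fin n) (z : Fin n → ℂ) :
    bdz μ (cexpρ ρ) z = cexpρ ρ z * bdz μ (rc ρ) z := by
  have hd : HasFDerivAt (cexpρ ρ) (cexpρ ρ z • fderiv ℝ (rc ρ) z) z := by
    have h1 : HasDerivAt Complex.exp (Complex.exp (rc ρ z)) (rc ρ z) :=
      Complex.hasDerivAt_exp (rc ρ z)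
    have h2 : HasFDerivAt (rc ρ) (fderiv ℝ (rc ρ) z) z :=
      ((hρ.differentiable one_le_inf) z).hasFDerivAt
    exact h1.comp_hasFDerivAt z h2
  simp only [bdz, hd.fderiv, ContinuousLinearMap.smul_apply, smul_eq_mul, cexpρ]
  ring

variable (hρ : ContDiff ℝ ∞ (rc ρ))
variable (hG : ∀ p : Pt n, Ft.G p = Real.exp (ρ p.1) * F.G p)

include hG in
lemma conf_Gc : Ft.Gc = fun x : Pt n => cexpρ ρ x.1 * F.Gc x := by
  funext x
  show ((Ft.G x : ℝ) : ℂ) = _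
  rw [hG x]
  push_cast
  rfl

include hρ hG in
lemma conf_dvbGc (l : Fin n) {p : Pt n} (hp : p ∈ slit n) :
    CFG.dvb l Ft.Gc p = cexpρ ρ p.1 * CFG.dvb l F.Gc p := by
  have hdE : DifferentiableAt ℝ (fun x : Pt n => cexpρ ρ x.1) p :=
    diffAt_base (((smooth_cexpρ hρ).differentiable one_le_inf) _)
  have hdGc : DifferentiableAt ℝ F.Gc p := diffAt (smooth_Gc F) hp
  rw [conf_Gc hG, dvb_mul hdE hdGc,
    dvb_base (((smooth_cexpρ hρ).differentiable one_le_inf) _)]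
  ring

include hρ hG in
lemma conf_Gm (β l : Fin n) {p : Pt n} (hp : p ∈ slit n) :
    Ft.Gm β l p = cexpρ ρ p.1 * F.Gm β l p := by
  have hdE : DifferentiableAt ℝ (fun x : Pt n => cexpρ ρ x.1) p :=
    diffAt_base (((smooth_cexpρ hρ).differentiable one_le_inf) _)
  have hdg : DifferentiableAt ℝ (CFG.dvb l F.Gc) p :=
    diffAt (smoothOn_dvb (smooth_Gc F) l) hp
  have h1 : Ft.Gm β l p = CFG.dv β (CFG.dvb l Ft.Gc) p := rfl
  rw [h1, dv_slit_congr (fun x hx => conf_dvbGc hρ hG l hx) hp,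
    dv_mul hdE hdg, dv_base (((smooth_cexpρ hρ).differentiable one_le_inf) _)]
  rw [show F.Gm β l p = CFG.dv β (CFG.dvb l F.Gc) p from rfl]
  ring

include hρ hG in
lemma conf_Levi {p : Pt n} (hp : p ∈ slit n) :
    Ft.Levi p = cexpρ ρ p.1 • F.Levi p := by
  ext β l
  rw [Matrix.smul_apply, smul_eq_mul]
  exact conf_Gm hρ hG β l hp

include hρ hG in
lemma conf_Ginv (l α : Fin n) {p : Pt n} (hp : p ∈ slit n) :
    Ft.Ginv l α p = (cexpρ ρ p.1)⁻¹ * F.Ginv l α p := by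
  have hinv : (Ft.Levi p)⁻¹ = (cexpρ ρ p.1)⁻¹ • (F.Levi p)⁻¹ := by
    apply Matrix.inv_eq_right_inv
    rw [conf_Levi hρ hG hp, Matrix.smul_mul, Matrix.mul_smul, smul_smul,
      mul_inv_cancel₀ (cexpρ_ne_zero _), one_smul, levi_mul_inv F hp]
  show (Ft.Levi p)⁻¹ l α = _
  rw [hinv, Matrix.smul_apply, smul_eq_mul]
  rfl

include hρ hG in
lemma conf_Γ0 (α μ : Fin n) {p : Pt n} (hp : p ∈ slit n) :
    Ft.Γ0 α μ p = F.Γ0 α μ p + bdz μ (rc ρ) p.1 * p.2 α := by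
  have hdE : DifferentiableAt ℝ (fun x : Pt n => cexpρ ρ x.1) p :=
    diffAt_base (((smooth_cexpρ hρ).differentiable one_le_inf) _)
  have hdg : ∀ l : Fin n, DifferentiableAt ℝ (CFG.dvb l F.Gc) p :=
    fun l => diffAt (smoothOn_dvb (smooth_Gc F) l) hp
  have hdz : ∀ l : Fin n, CFG.dz μ (CFG.dvb l Ft.Gc) p
      = cexpρ ρ p.1 * (bdz μ (rc ρ) p.1 * CFG.dvb l F.Gc p
          + CFG.dz μ (CFG.dvb l F.Gc) p) := by
    intro l
    rw [dz_slit_congr (fun x hx => conf_dvbGc hρ hG l hx) hp, dz_mul hdE (hdg l),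
      dz_base (((smooth_cexpρ hρ).differentiable one_le_inf) _), bdz_cexpρ hρ]
    ring
  have h0 : Ft.Γ0 α μ p = ∑ l, Ft.Ginv l α p * CFG.dz μ (CFG.dvb l Ft.Gc) p := rfl
  have hc : (cexpρ ρ p.1)⁻¹ * cexpρ ρ p.1 = 1 := inv_mul_cancel₀ (cexpρ_ne_zero _)
  rw [h0]
  have h2 : ∀ l, Ft.Ginv l α p * CFG.dz μ (CFG.dvb l Ft.Gc) p
      = F.Ginv l α p * CFG.dz μ (CFG.dvb l F.Gc) p
        + bdz μ (rc ρ) p.1 * (F.Ginv l α p * CFG.dvb l F.Gc p) := by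
    intro l
    rw [conf_Ginv hρ hG l α hp, hdz l]
    have : (cexpρ ρ p.1)⁻¹ * F.Ginv l α p *
        (cexpρ ρ p.1 * (bdz μ (rc ρ) p.1 * CFG.dvb l F.Gc p
          + CFG.dz μ (CFG.dvb l F.Gc) p))
        = ((cexpρ ρ p.1)⁻¹ * cexpρ ρ p.1) * (F.Ginv l α p *
            (bdz μ (rc ρ) p.1 * CFG.dvb l F.Gc p + CFG.dz μ (CFG.dvb l F.Gc) p)) := by
      ring
    rw [this, hc]
    ring
  rw [Finset.sum_congr rfl fun l _ => h2 l, Finset.sum_add_distrib]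
  congr 1
  rw [← Finset.mul_sum, E1 F α hp]

include hρ hG in
lemma conf_Γh (α β μ : Fin n) {p : Pt n} (hp : p ∈ slit n) :
    Ft.Γh α β μ p = F.Γh α β μ p + (if α = β then (1:ℂ) else 0) * bdz μ (rc ρ) p.1 := by
  have hdE : DifferentiableAt ℝ (fun x : Pt n => cexpρ ρ x.1) p :=
    diffAt_base (((smooth_cexpρ hρ).differentiable one_le_inf) _)
  have hdGm : ∀ β l : Fin n, DifferentiableAt ℝ (F.Gm β l) p :=
    fun β l => diffAt (smoothOn_Gm F β l) hp
  have hc : (cexpρ ρ p.1)⁻¹ * cexpρ ρ p.1 = 1 := inv_mul_cancel₀ (cexpρ_ne_zero _)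
  -- the horizontal derivative of the rescaled metric
  have hδ : ∀ l : Fin n, Ft.δh μ (Ft.Gm β l) p
      = cexpρ ρ p.1 * (bdz μ (rc ρ) p.1 * F.Gm β l p + F.δh μ (F.Gm β l) p) := by
    intro l
    have h1 : Ft.δh μ (Ft.Gm β l) p
        = CFG.dz μ (Ft.Gm β l) p - ∑ σ, Ft.Γ0 σ μ p * CFG.dv σ (Ft.Gm β l) p := rfl
    have h2 : CFG.dz μ (Ft.Gm β l) p
        = cexpρ ρ p.1 * (bdz μ (rc ρ) p.1 * F.Gm β l p + CFG.dz μ (F.Gm β l) p) := by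
      rw [dz_slit_congr (fun x hx => conf_Gm hρ hG β l hx) hp, dz_mul hdE (hdGm β l),
        dz_base (((smooth_cexpρ hρ).differentiable one_le_inf) _), bdz_cexpρ hρ]
      ring
    have h3 : ∀ σ : Fin n, CFG.dv σ (Ft.Gm β l) p
        = cexpρ ρ p.1 * CFG.dv σ (F.Gm β l) p := by
      intro σ
      rw [dv_slit_congr (fun x hx => conf_Gm hρ hG β l hx) hp, dv_mul hdE (hdGm β l),
        dv_base (((smooth_cexpρ hρ).differentiable one_le_inf) _)]
      ring
    have h4 : ∀ σ : Fin n, Ft.Γ0 σ μ p * CFG.dv σ (Ft.Gm β l) p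
        = cexpρ ρ p.1 * (F.Γ0 σ μ p * CFG.dv σ (F.Gm β l) p)
          + cexpρ ρ p.1 * bdz μ (rc ρ) p.1 * (p.2 σ * CFG.dv σ (F.Gm β l) p) := by
      intro σ
      rw [conf_Γ0 hρ hG σ μ hp, h3 σ]
      ring
    rw [h1, h2, Finset.sum_congr rfl fun σ _ => h4 σ, Finset.sum_add_distrib,
      ← Finset.mul_sum, ← Finset.mul_sum, E3 F β l hp]
    have h5 : F.δh μ (F.Gm β l) p
        = CFG.dz μ (F.Gm β l) p - ∑ σ, F.Γ0 σ μ p * CFG.dv σ (F.Gm β l) p := rfl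
    rw [h5]
    ring
  have h0 : Ft.Γh α β μ p = ∑ l, Ft.Ginv l α p * Ft.δh μ (Ft.Gm β l) p := rfl
  have h2 : ∀ l, Ft.Ginv l α p * Ft.δh μ (Ft.Gm β l) p
      = F.Ginv l α p * F.δh μ (F.Gm β l) p
        + bdz μ (rc ρ) p.1 * (F.Gm β l p * F.Ginv l α p) := by
    intro l
    rw [conf_Ginv hρ hG l α hp, hδ l]
    have : (cexpρ ρ p.1)⁻¹ * F.Ginv l α p *
        (cexpρ ρ p.1 * (bdz μ (rc ρ) p.1 * F.Gm β l p + F.δh μ (F.Gm β l) p))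
        = ((cexpρ ρ p.1)⁻¹ * cexpρ ρ p.1) * (F.Ginv l α p *
            (bdz μ (rc ρ) p.1 * F.Gm β l p + F.δh μ (F.Gm β l) p)) := by
      ring
    rw [this, hc]
    ring
  rw [h0, Finset.sum_congr rfl fun l _ => h2 l, Finset.sum_add_distrib,
    ← Finset.mul_sum, sum_Gm_Ginv F hp β α]
  have h6 : F.Γh α β μ p = ∑ l, F.Ginv l α p * F.δh μ (F.Gm β l) p := rfl
  rw [← h6]
  by_cases hab : α = β
  · subst hab
    simp [mul_comm]
  · simp [hab, Ne.symm hab]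

include hρ hG in
lemma conf_RundCurv (α β μ ν : Fin n) {p : Pt n} (hp : p ∈ slit n) :
    Ft.RundCurv α β μ ν p
      = F.RundCurv α β μ ν p
        - (if α = β then (1:ℂ) else 0) * bdzb ν (bdz μ (rc ρ)) p.1 := by
  set c : ℂ := if α = β then (1:ℂ) else 0 with hcdef
  have hdΓ : DifferentiableAt ℝ (F.Γh α β μ) p := diffAt (homog_Γh F α β μ).1 hp
  have hbd : DifferentiableAt ℝ (fun x : Pt n => bdz μ (rc ρ) x.1) p :=
    diffAt_base (((smooth_bdz hρ μ).differentiable one_le_inf) _)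
  have hdc : DifferentiableAt ℝ (fun x : Pt n => c * bdz μ (rc ρ) x.1) p :=
    hbd.const_mul c
  have hTeq : Set.EqOn (Ft.Γh α β μ)
      (fun x : Pt n => F.Γh α β μ x + c * bdz μ (rc ρ) x.1) (slit n) :=
    fun x hx => conf_Γh hρ hG α β μ hx
  have hdzb : CFG.dzb ν (Ft.Γh α β μ) p
      = CFG.dzb ν (F.Γh α β μ) p + c * bdzb ν (bdz μ (rc ρ)) p.1 := by
    rw [dzb_slit_congr hTeq hp, dzb_add hdΓ hdc, dzb_const_mul hbd c,
      dzb_base (((smooth_bdz hρ μ).differentiable one_le_inf) _)]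
  have hdvb : ∀ σ : Fin n, CFG.dvb σ (Ft.Γh α β μ) p = CFG.dvb σ (F.Γh α β μ) p := by
    intro σ
    rw [dvb_slit_congr hTeq hp, dvb_add hdΓ hdc, dvb_const_mul hbd c,
      dvb_base (((smooth_bdz hρ μ).differentiable one_le_inf) _), mul_zero, add_zero]
  have h0 : Ft.RundCurv α β μ ν p
      = -(CFG.dzb ν (Ft.Γh α β μ) p
          - ∑ σ, conj (Ft.Γ0 σ ν p) * CFG.dvb σ (Ft.Γh α β μ) p) := rfl
  have h1 : F.RundCurv α β μ ν p
      = -(CFG.dzb ν (F.Γh α β μ) p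
          - ∑ σ, conj (F.Γ0 σ ν p) * CFG.dvb σ (F.Γh α β μ) p) := rfl
  have h2 : ∀ σ : Fin n, conj (Ft.Γ0 σ ν p) * CFG.dvb σ (Ft.Γh α β μ) p
      = conj (F.Γ0 σ ν p) * CFG.dvb σ (F.Γh α β μ) p
        + conj (bdz ν (rc ρ) p.1) * (conj (p.2 σ) * CFG.dvb σ (F.Γh α β μ) p) := by
    intro σ
    rw [hdvb σ, conf_Γ0 hρ hG σ ν hp, map_add, map_mul]
    ring
  rw [h0, h1, hdzb, Finset.sum_congr rfl fun σ _ => h2 σ, Finset.sum_add_distrib,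
    ← Finset.mul_sum, E2 F α β μ hp, mul_zero, add_zero]
  ring

/-- Mixed Wirtinger partials of a smooth function on the base commute. -/
lemma mixed_partials {g : (Fin n → ℂ) → ℂ} (hg : ContDiff ℝ ∞ g) (γ ν : Fin n)
    (z : Fin n → ℂ) : bdz γ (bdzb ν g) z = bdzb ν (bdz γ g) z := by
  have hdg : ∀ y, HasFDerivAt g (fderiv ℝ g y) y := fun y =>
    ((hg.differentiable one_le_inf) y).hasFDerivAt
  set D2 := fderiv ℝ (fderiv ℝ g) z with hD2def
  have hD2 : HasFDerivAt (fderiv ℝ g) D2 z :=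
    (((hg.fderiv_right (by exact_mod_cast le_top)).differentiable one_le_inf) z).hasFDerivAt
  have hsym : ∀ v w, D2 v w = D2 w v := fun v w =>
    second_derivative_symmetric hdg hD2 v w
  have hda : ∀ w : Fin n → ℂ, DifferentiableAt ℝ (fun y => fderiv ℝ g y w) z :=
    fun w => (hD2.clm_apply (hasFDerivAt_const w z)).differentiableAt
  have hfd : ∀ w u : Fin n → ℂ, fderiv ℝ (fun y => fderiv ℝ g y w) z u = D2 u w := by
    intro w u
    rw [(hD2.clm_apply (hasFDerivAt_const w z)).fderiv]
    simp
  set e1γ : Fin n → ℂ := Pi.single γ (1:ℂ) with he1γ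
  set eIγ : Fin n → ℂ := Pi.single γ Complex.I with heIγ
  set e1ν : Fin n → ℂ := Pi.single ν (1:ℂ) with he1ν
  set eIν : Fin n → ℂ := Pi.single ν Complex.I with heIν
  have hplus : ∀ w1 w2 u : Fin n → ℂ,
      fderiv ℝ (fun y => (1/2 : ℂ) * (fderiv ℝ g y w1 + Complex.I * fderiv ℝ g y w2)) z u
        = (1/2 : ℂ) * (D2 u w1 + Complex.I * D2 u w2) := by
    intro w1 w2 u
    rw [fderiv_const_mul (a := fun y => fderiv ℝ g y w1 + Complex.I * fderiv ℝ g y w2) ((hda w1).add ((hda w2).const_mul _)) _]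
    rw [ContinuousLinearMap.smul_apply, smul_eq_mul]
    rw [fderiv_fun_add (hda w1) ((hda w2).const_mul _), ContinuousLinearMap.add_apply]
    rw [fderiv_const_mul (hda w2) _, ContinuousLinearMap.smul_apply, smul_eq_mul]
    rw [hfd w1 u, hfd w2 u]
  have hminus : ∀ w1 w2 u : Fin n → ℂ,
      fderiv ℝ (fun y => (1/2 : ℂ) * (fderiv ℝ g y w1 - Complex.I * fderiv ℝ g y w2)) z u
        = (1/2 : ℂ) * (D2 u w1 - Complex.I * D2 u w2) := by
    intro w1 w2 u
    rw [fderiv_const_mul (a := fun y => fderiv ℝ g y w1 - Complex.I * fderiv ℝ g y w2) ((hda w1).sub ((hda w2).const_mul _)) _]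
    rw [ContinuousLinearMap.smul_apply, smul_eq_mul]
    rw [fderiv_fun_sub (hda w1) ((hda w2).const_mul _), ContinuousLinearMap.sub_apply]
    rw [fderiv_const_mul (hda w2) _, ContinuousLinearMap.smul_apply, smul_eq_mul]
    rw [hfd w1 u, hfd w2 u]
  have h1 : bdz γ (bdzb ν g) z
      = (1/2 : ℂ) * ((1/2 : ℂ) * (D2 e1γ e1ν + Complex.I * D2 e1γ eIν)
          - Complex.I * ((1/2 : ℂ) * (D2 eIγ e1ν + Complex.I * D2 eIγ eIν))) := by
    show (1/2 : ℂ) * (fderiv ℝ (bdzb ν g) z e1γ - Complex.I * fderiv ℝ (bdzb ν g) z eIγ) = _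
    rw [show bdzb ν g = fun y => (1/2 : ℂ) *
        (fderiv ℝ g y e1ν + Complex.I * fderiv ℝ g y eIν) from rfl]
    rw [hplus e1ν eIν e1γ, hplus e1ν eIν eIγ]
  have h2 : bdzb ν (bdz γ g) z
      = (1/2 : ℂ) * ((1/2 : ℂ) * (D2 e1ν e1γ - Complex.I * D2 e1ν eIγ)
          + Complex.I * ((1/2 : ℂ) * (D2 eIν e1γ - Complex.I * D2 eIν eIγ))) := by
    show (1/2 : ℂ) * (fderiv ℝ (bdz γ g) z e1ν + Complex.I * fderiv ℝ (bdz γ g) z eIν) = _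
    rw [show bdz γ g = fun y => (1/2 : ℂ) *
        (fderiv ℝ g y e1γ - Complex.I * fderiv ℝ g y eIγ) from rfl]
    rw [hminus e1γ eIγ e1ν, hminus e1γ eIγ eIν]
  rw [h1, h2, hsym e1γ e1ν, hsym e1γ eIν, hsym eIγ e1ν, hsym eIγ eIν]
  ring

end Conformal

end CFG

/-- second half of Theorem 1.6 / Theorem 6.2.  Let `(M, F)`
be a non-compact strongly pseudoconvex Rund Kähler-Finsler-like manifold.  The
conformal metric `F̃ = e^{ρ/2} F` is Rund Kähler-Finsler-like if and only if
`∂∂̄ρ = 0` on `M`. -/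
theorem statement17 {n : ℕ} (hn : 2 ≤ n) (F Ft : SPCF n)
    (ρ : (Fin n → ℂ) → ℝ)
    (hnoncpt : ¬ IsCompact (Set.univ : Set (Fin n → ℂ)))
    (hconf : IsConformal F Ft ρ) (hF : F.IsRundKL) :
    Ft.IsRundKL ↔
      ∀ (γ ν : Fin n) (z : Fin n → ℂ),
        bdz γ (bdzb ν (fun w => ((ρ w : ℝ) : ℂ))) z = 0 := by
  classical
  obtain ⟨hρ0, hG⟩ := hconf
  have hρc : ContDiff ℝ ((⊤ : ℕ∞) : WithTop ℕ∞) (rc ρ) :=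
    Complex.ofRealCLM.contDiff.comp (hρ0.of_le (by simp))
  have hrc : (fun w => ((ρ w : ℝ) : ℂ)) = rc ρ := rfl
  have key : ∀ (α β μ ν : Fin n) (p : Pt n), p ∈ slit n →
      Ft.RundCurv α β μ ν p = F.RundCurv α β μ ν p
        - (if α = β then (1:ℂ) else 0) * bdzb ν (bdz μ (rc ρ)) p.1 :=
    fun α β μ ν p hp => conf_RundCurv hρc hG α β μ ν hp
  constructor
  · intro hFt γ ν z
    -- pick an index different from `γ`
    obtain ⟨α, hα⟩ : ∃ α : Fin n, α ≠ γ := by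
      rcases eq_or_ne γ (⟨0, by omega⟩ : Fin n) with h | h
      · refine ⟨⟨1, by omega⟩, ?_⟩
        rw [h]
        simp [Fin.ext_iff]
      · exact ⟨⟨0, by omega⟩, Ne.symm h⟩
    set v0 : Fin n → ℂ := Pi.single (⟨0, by omega⟩ : Fin n) 1 with hv0
    have hp : ((z, v0) : Pt n) ∈ slit n := by
      show v0 ≠ 0
      intro h
      have := congrFun h (⟨0, by omega⟩ : Fin n)
      simp [hv0] at this
    have h1 := hFt α α γ ν _ hp
    rw [key α α γ ν _ hp, key α γ α ν _ hp, hF α α γ ν _ hp] at h1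
    simp only [if_pos rfl, if_neg hα, eq_self_iff_true, if_true, one_mul, zero_mul, sub_zero] at h1
    have hX : bdzb ν (bdz γ (rc ρ)) ((z, v0) : Pt n).1 = 0 := by
      linear_combination -h1
    rw [hrc, mixed_partials hρc γ ν z]
    exact hX
  · intro hzero α β μ ν p hp
    have hz : ∀ μ' ν' : Fin n, bdzb ν' (bdz μ' (rc ρ)) p.1 = 0 := by
      intro μ' ν'
      rw [← mixed_partials hρc μ' ν' p.1]
      exact hzero μ' ν' p.1
    rw [key α β μ ν p hp, key α μ β ν p hp, hF α β μ ν p hp, hz, hz]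
    simp
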